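/- Let O ⊆ ℝ^d be a bounded open set whose boundary is of class C², let p be a real number with p ≥ 2, and let λ > 0. Suppose u₁ and u₂ are real-valued functions, each twice continuously differentiable on O and continuously differentiable on the closure of O, and each u = u_i satisfies Δu(x) − u(x)^{p−1} + λ u(x) = 0 and u(x) > 0 for all x ∈ O, and u(x) = 0 for all x ∈ ∂O. Then ∫_O ( u₁(x)^{p−1} u₂(x) − u₂(x)^{p−1} u₁(x) ) dx = 0. -/

import Mathlib

open MeasureTheory

/-- The Laplacian `Δu(x) = ∑ i, ∂²u/∂x_i²(x)` as the sum of second partial derivatives. -/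
noncomputable def lap {d : ℕ} (u : EuclideanSpace ℝ (Fin d) → ℝ)
    (x : EuclideanSpace ℝ (Fin d)) : ℝ :=
  ∑ i : Fin d, fderiv ℝ (fun y => fderiv ℝ u y (EuclideanSpace.single i (1 : ℝ))) x
    (EuclideanSpace.single i (1 : ℝ))

/-- An open set `O` has boundary of class `C²`: near each boundary point there is a `C²`
defining function with nonvanishing differential whose zero set is the boundary and
whose negativity set is `O` (a standard formulation of a `C²` boundary, equivalent to
the local flattening by a `C²` diffeomorphism). -/
def IsC2Boundary {d : ℕ} (O : Set (EuclideanSpace ℝ (Fin d))) : Prop :=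
  ∀ x ∈ frontier O, ∃ U : Set (EuclideanSpace ℝ (Fin d)), IsOpen U ∧ x ∈ U ∧
    ∃ ρ : EuclideanSpace ℝ (Fin d) → ℝ,
      ContDiffOn ℝ 2 ρ U ∧ (∀ y ∈ U, fderiv ℝ ρ y ≠ 0) ∧
      (∀ y ∈ U, (y ∈ O ↔ ρ y < 0)) ∧ (∀ y ∈ U, (y ∈ frontier O ↔ ρ y = 0))

/-!
With `u = u₁` and `v = u₂`, the equation turns the integrand into `v Δu - u Δv`, so the claim
is Green's second identity `∫_O (v Δu - u Δv) = 0` for functions vanishing on `∂O`.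
The field `v ∇u - u ∇v` has divergence `v Δu - u Δv` in `O`; we multiply it by the cutoff
`χ_ε = η((u² + v²) / ε)`, with `η` smooth, `0` on `(-∞, 1]` and `1` on `[2, ∞)`. Since
`u² + v²` is continuous up to `∂O` and vanishes there, the truncated field, extended by zero, is
`C¹` with compact support, so its divergence `χ_ε (v Δu - u Δv) + ∇χ_ε · (v ∇u - u ∇v)` has
integral zero. The error term `∇χ_ε · (v ∇u - u ∇v)` is bounded uniformly in `ε`: `∇χ_ε` is
`η'` times `2 (u ∇u + v ∇v) / ε`, and by Lagrange's identity each coordinate of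
`(u ∇u + v ∇v) (v ∇u - u ∇v)` is at most `(u² + v²) (|∇u|² + |∇v|²)`, while `(u² + v²) / ε ≤ 2`
where `η' ≠ 0`. It also vanishes for small `ε` at every point of `O`, so dominated convergence
as `ε → 0⁺` gives the identity.
-/

open Set Filter Topology Bornology

section FDeriv

variable {E F : Type*} [NormedAddCommGroup E] [NormedSpace ℝ E] [NormedAddCommGroup F]
  [NormedSpace ℝ F] {O : Set E} {u : E → F}

theorem exists_eventually_norm_fderiv_le_of_contDiffOn_closure (hO : IsOpen O)
    (hu : ContDiffOn ℝ 1 u (closure O)) {x : E} (hx : x ∈ closure O) :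
    ∃ C, ∀ᶠ y in 𝓝[closure O] x, y ∈ O → ‖fderiv ℝ u y‖ ≤ C := by
  obtain ⟨t, ht, -, -, f', hf', hf'x⟩ :=
    (contDiffWithinAt_succ_iff_hasFDerivWithinAt' (n := 0) (by simp)).1 (hu x hx)
  rw [insert_eq_of_mem hx] at ht
  refine ⟨‖f' x‖ + 1, ?_⟩
  filter_upwards [ht, hf'x.continuousWithinAt.norm.eventually (gt_mem_nhds (lt_add_one ‖f' x‖))]
    with y hyt hy hyO
  rw [((hf' y hyt).hasFDerivAt (mem_of_superset (hO.mem_nhds hyO) subset_closure)).fderiv]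
  exact hy.le

theorem exists_forall_norm_fderiv_le_of_contDiffOn_closure (hO : IsOpen O)
    (hK : IsCompact (closure O)) (hu : ContDiffOn ℝ 1 u (closure O)) :
    ∃ C, ∀ x ∈ O, ‖fderiv ℝ u x‖ ≤ C := by
  suffices ∃ C, ∀ y ∈ closure O, y ∈ O → ‖fderiv ℝ u y‖ ≤ C from
    this.imp fun C hC y hy => hC y (subset_closure hy) hy
  refine hK.induction_on ⟨0, by simp⟩ (fun s t hst ⟨C, hC⟩ => ⟨C, fun y hy => hC y (hst hy)⟩)
    (fun s t ⟨C, hC⟩ ⟨D, hD⟩ => ⟨max C D, ?_⟩) fun x hx => ?_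
  · rintro y (hy | hy) hyO
    exacts [(hC y hy hyO).trans (le_max_left _ _), (hD y hy hyO).trans (le_max_right _ _)]
  · obtain ⟨C, hC⟩ := exists_eventually_norm_fderiv_le_of_contDiffOn_closure hO hu hx
    exact ⟨_, hC, C, fun y hy => hy⟩

theorem ContDiffOn.contDiffOn_fderiv_apply (hO : IsOpen O) (hu : ContDiffOn ℝ 2 u O)
    (e : E) : ContDiffOn ℝ 1 (fun y => fderiv ℝ u y e) O :=
  (hu.fderiv_of_isOpen hO (m := 1) (by norm_num)).clm_apply contDiffOn_const

end FDeriv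

noncomputable def smoothStep (t : ℝ) : ℝ := Real.smoothTransition (t - 1)

namespace smoothStep

theorem eq_zero_of_le_one {t : ℝ} (ht : t ≤ 1) : smoothStep t = 0 :=
  Real.smoothTransition.zero_of_nonpos (by linarith)

theorem eq_one_of_two_le {t : ℝ} (ht : 2 ≤ t) : smoothStep t = 1 :=
  Real.smoothTransition.one_of_one_le (by linarith)

theorem nonneg (t : ℝ) : 0 ≤ smoothStep t := Real.smoothTransition.nonneg _

theorem le_one (t : ℝ) : smoothStep t ≤ 1 := Real.smoothTransition.le_one _

protected theorem contDiff {n : ℕ∞} : ContDiff ℝ n smoothStep :=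
  Real.smoothTransition.contDiff.comp (contDiff_id.sub contDiff_const)

theorem deriv_eq_zero {t : ℝ} (ht : t ∉ Icc 1 2) : deriv smoothStep t = 0 := by
  rw [mem_Icc, not_and_or, not_le, not_le] at ht
  rcases ht with ht | ht
  · rw [Filter.EventuallyEq.deriv_eq (f := fun _ => 0), deriv_const]
    filter_upwards [Iio_mem_nhds ht] with s hs using eq_zero_of_le_one hs.le
  · rw [Filter.EventuallyEq.deriv_eq (f := fun _ => 1), deriv_const]
    filter_upwards [Ioi_mem_nhds ht] with s hs using eq_one_of_two_le hs.le

theorem exists_abs_mul_deriv_le : ∃ K, ∀ t, |t * deriv smoothStep t| ≤ K := by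
  have hcont : Continuous fun t => t * deriv smoothStep t :=
    continuous_id.mul (smoothStep.contDiff (n := 1).continuous_deriv le_rfl)
  exact hcont.bounded_above_of_compact_support <|
    HasCompactSupport.intro (isCompact_Icc (a := 1) (b := 2)) fun t ht => by
      simp [deriv_eq_zero ht]

end smoothStep

section Flux

variable {E : Type*} [NormedAddCommGroup E] [NormedSpace ℝ E]

noncomputable def greenFlux (u v : E → ℝ) (e x : E) : ℝ :=
  v x * fderiv ℝ u x e - u x * fderiv ℝ v x e

noncomputable def dirichletCutoff (u v : E → ℝ) (ε : ℝ) (x : E) : ℝ :=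
  smoothStep ((u x ^ 2 + v x ^ 2) / ε)

variable {O : Set E} {χ u v : E → ℝ} {x e : E}

theorem fderiv_mul_greenFlux_apply (hχ : DifferentiableAt ℝ χ x)
    (hu : DifferentiableAt ℝ u x) (hv : DifferentiableAt ℝ v x)
    (hu' : DifferentiableAt ℝ (fun y => fderiv ℝ u y e) x)
    (hv' : DifferentiableAt ℝ (fun y => fderiv ℝ v y e) x) :
    fderiv ℝ (fun y => χ y * greenFlux u v e y) x e =
      fderiv ℝ χ x e * greenFlux u v e x +
        χ x * (v x * fderiv ℝ (fun y => fderiv ℝ u y e) x e -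
          u x * fderiv ℝ (fun y => fderiv ℝ v y e) x e) := by
  simp only [greenFlux]
  rw [(hχ.hasFDerivAt.fun_mul ((hv.hasFDerivAt.fun_mul hu'.hasFDerivAt).fun_sub
    (hu.hasFDerivAt.fun_mul hv'.hasFDerivAt))).fderiv]
  simp only [add_apply, sub_apply, smul_apply, smul_eq_mul]
  ring

theorem fderiv_dirichletCutoff_apply {ε : ℝ} (hu : DifferentiableAt ℝ u x)
    (hv : DifferentiableAt ℝ v x) :
    fderiv ℝ (dirichletCutoff u v ε) x e = deriv smoothStep ((u x ^ 2 + v x ^ 2) / ε) *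
      (2 * (u x * fderiv ℝ u x e + v x * fderiv ℝ v x e) / ε) := by
  have hs := ((hu.hasFDerivAt.pow 2).fun_add (hv.hasFDerivAt.pow 2)).mul_const ε⁻¹
  have hη := ((smoothStep.contDiff (n := 1)).differentiable one_ne_zero
    ((u x ^ 2 + v x ^ 2) * ε⁻¹)).hasDerivAt
  have hχ := hη.comp_hasFDerivAt x hs
  rw [Function.comp_def] at hχ
  have hdef : dirichletCutoff u v ε = fun y => smoothStep ((u y ^ 2 + v y ^ 2) * ε⁻¹) := rfl
  simp only [hdef, hχ.fderiv, div_eq_mul_inv, smul_apply, add_apply, smul_eq_mul, nsmul_eq_mul]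
  ring

theorem abs_fderiv_dirichletCutoff_mul_greenFlux_le {K M ε : ℝ}
    (hK : ∀ t, |t * deriv smoothStep t| ≤ K) (hε : 0 < ε)
    (hu : DifferentiableAt ℝ u x) (hv : DifferentiableAt ℝ v x)
    (hue : |fderiv ℝ u x e| ≤ M) (hve : |fderiv ℝ v x e| ≤ M) :
    |fderiv ℝ (dirichletCutoff u v ε) x e * greenFlux u v e x| ≤ 2 * M ^ 2 * K := by
  rw [fderiv_dirichletCutoff_apply hu hv, greenFlux]
  set s := u x ^ 2 + v x ^ 2
  set X := u x * fderiv ℝ u x e + v x * fderiv ℝ v x e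
  set Y := v x * fderiv ℝ u x e - u x * fderiv ℝ v x e
  -- Lagrange's identity `X² + Y² = (u² + v²)(∂u² + ∂v²)`
  have hXY : 2 * |X * Y| ≤ s * (fderiv ℝ u x e ^ 2 + fderiv ℝ v x e ^ 2) := by
    rw [abs_mul]
    nlinarith [sq_nonneg (|X| - |Y|), sq_abs X, sq_abs Y]
  have hgrad : fderiv ℝ u x e ^ 2 + fderiv ℝ v x e ^ 2 ≤ 2 * M ^ 2 := by
    nlinarith [sq_le_sq' (abs_le.1 hue).1 (abs_le.1 hue).2,
      sq_le_sq' (abs_le.1 hve).1 (abs_le.1 hve).2]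
  calc |deriv smoothStep (s / ε) * (2 * X / ε) * Y|
      = |deriv smoothStep (s / ε)| * (2 * |X * Y|) / ε := by
        simp only [abs_mul, abs_div, abs_two, abs_of_pos hε]; ring
    _ ≤ |deriv smoothStep (s / ε)| * (s * (fderiv ℝ u x e ^ 2 + fderiv ℝ v x e ^ 2)) / ε := by
        gcongr
    _ = |s / ε * deriv smoothStep (s / ε)| * (fderiv ℝ u x e ^ 2 + fderiv ℝ v x e ^ 2) := by
        rw [abs_mul, abs_of_nonneg (by positivity : 0 ≤ s / ε)]; ring
    _ ≤ K * (2 * M ^ 2) :=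
        mul_le_mul (hK _) hgrad (by positivity) ((abs_nonneg _).trans (hK 0))
    _ = 2 * M ^ 2 * K := by ring

theorem contDiffOn_dirichletCutoff (hu : ContDiffOn ℝ 2 u O) (hv : ContDiffOn ℝ 2 v O) (ε : ℝ) :
    ContDiffOn ℝ 1 (dirichletCutoff u v ε) O :=
  smoothStep.contDiff.comp_contDiffOn
    ((((hu.pow 2).add (hv.pow 2)).div_const ε).of_le (by norm_num))

theorem contDiffOn_greenFlux (hO : IsOpen O) (hu : ContDiffOn ℝ 2 u O)
    (hv : ContDiffOn ℝ 2 v O) (e : E) :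
    ContDiffOn ℝ 1 (greenFlux u v e) O :=
  ((hv.of_le (by norm_num)).mul (hu.contDiffOn_fderiv_apply hO e)).sub
    ((hu.of_le (by norm_num)).mul (hv.contDiffOn_fderiv_apply hO e))

end Flux

section Divergence

variable {E : Type*} [NormedAddCommGroup E] [NormedSpace ℝ E] [FiniteDimensional ℝ E]
  [MeasurableSpace E] [BorelSpace E] {μ : Measure E} [μ.IsAddHaarMeasure]

theorem integral_fderiv_apply_eq_zero {g : E → ℝ} (hg : ContDiff ℝ 1 g)
    (h'g : HasCompactSupport g) (v : E) : ∫ x, fderiv ℝ g x v ∂μ = 0 := by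
  have hg' : Integrable (fun x => fderiv ℝ g x v) μ :=
    ((hg.continuous_fderiv one_ne_zero).clm_apply continuous_const).integrable_of_hasCompactSupport
      (h'g.fderiv_apply ℝ v)
  simpa using integral_mul_fderiv_eq_neg_fderiv_mul_of_integrable (μ := μ)
    (f := fun _ => (1 : ℝ)) (by simp) (by simpa using hg')
    (by simpa using hg.continuous.integrable_of_hasCompactSupport h'g)
    (fun x _ => differentiableAt_const _) fun x _ => hg.differentiable one_ne_zero x

end Divergence

theorem eventually_lt_of_frontier_eq_zero {X : Type*} [TopologicalSpace X] {O : Set X}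
    {s : X → ℝ} (hO : IsOpen O) (hs : ContinuousOn s (closure O))
    (h0 : ∀ x ∈ frontier O, s x = 0) {x : X} (hx : x ∉ O) {ε : ℝ} (hε : 0 < ε) :
    ∀ᶠ y in 𝓝 x, y ∈ O → s y < ε := by
  by_cases hxO : x ∈ closure O
  · have hsx : s x < ε := by rwa [h0 x ⟨hxO, by rwa [hO.interior_eq]⟩]
    filter_upwards [eventually_nhdsWithin_iff.1 ((hs x hxO).eventually (gt_mem_nhds hsx))]
      with y hy hyO using hy (subset_closure hyO)
  · filter_upwards [isClosed_closure.isOpen_compl.mem_nhds hxO] with y hy hyO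
    exact absurd (subset_closure hyO) hy

section Euclidean

variable {d : ℕ} {O : Set (EuclideanSpace ℝ (Fin d))} {u v : EuclideanSpace ℝ (Fin d) → ℝ}
  {x : EuclideanSpace ℝ (Fin d)}

noncomputable def divergence (F : Fin d → EuclideanSpace ℝ (Fin d) → ℝ)
    (x : EuclideanSpace ℝ (Fin d)) : ℝ :=
  ∑ i, fderiv ℝ (F i) x (EuclideanSpace.single i 1)

theorem continuous_divergence {F : Fin d → EuclideanSpace ℝ (Fin d) → ℝ}
    (hF : ∀ i, ContDiff ℝ 1 (F i)) : Continuous (divergence F) :=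
  continuous_finsetSum _ fun i _ =>
    ((hF i).continuous_fderiv one_ne_zero).clm_apply continuous_const

theorem integral_divergence_eq_zero {F : Fin d → EuclideanSpace ℝ (Fin d) → ℝ}
    (hF : ∀ i, ContDiff ℝ 1 (F i)) (h'F : ∀ i, HasCompactSupport (F i)) :
    ∫ x, divergence F x = 0 := by
  unfold divergence
  rw [integral_finsetSum]
  · exact Finset.sum_eq_zero fun i _ => integral_fderiv_apply_eq_zero (hF i) (h'F i) _
  · exact fun i _ => (((hF i).continuous_fderiv one_ne_zero).clm_apply
      continuous_const).integrable_of_hasCompactSupport ((h'F i).fderiv_apply ℝ _)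

noncomputable def truncatedGreenFlux (O : Set (EuclideanSpace ℝ (Fin d)))
    (u v : EuclideanSpace ℝ (Fin d) → ℝ) (ε : ℝ) (i : Fin d) :
    EuclideanSpace ℝ (Fin d) → ℝ :=
  O.indicator fun y => dirichletCutoff u v ε y * greenFlux u v (EuclideanSpace.single i 1) y

theorem divergence_mul_greenFlux (hO : IsOpen O) (hu : ContDiffOn ℝ 2 u O)
    (hv : ContDiffOn ℝ 2 v O) {χ : EuclideanSpace ℝ (Fin d) → ℝ} (hχ : DifferentiableAt ℝ χ x)
    (hx : x ∈ O) :
    divergence (fun i y => χ y * greenFlux u v (EuclideanSpace.single i 1) y) x =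
      χ x * (v x * lap u x - u x * lap v x) +
        ∑ i, fderiv ℝ χ x (EuclideanSpace.single i 1) *
          greenFlux u v (EuclideanSpace.single i 1) x := by
  have hdiff {w : EuclideanSpace ℝ (Fin d) → ℝ} (hw : ContDiffOn ℝ 2 w O) :
      DifferentiableAt ℝ w x ∧ ∀ e, DifferentiableAt ℝ (fun y => fderiv ℝ w y e) x :=
    ⟨(hw.contDiffAt (hO.mem_nhds hx)).differentiableAt (by norm_num), fun e =>
      ((hw.contDiffOn_fderiv_apply hO e).contDiffAt (hO.mem_nhds hx)).differentiableAt one_ne_zero⟩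
  rw [divergence, Finset.sum_congr rfl fun i _ => fderiv_mul_greenFlux_apply hχ (hdiff hu).1
    (hdiff hv).1 ((hdiff hu).2 _) ((hdiff hv).2 _), Finset.sum_add_distrib, add_comm]
  simp only [lap, mul_sub, Finset.mul_sum, ← Finset.sum_sub_distrib]

theorem truncatedGreenFlux_eventuallyEq_zero (hO : IsOpen O)
    (hu : ContinuousOn u (closure O)) (hv : ContinuousOn v (closure O))
    (hu₀ : ∀ x ∈ frontier O, u x = 0) (hv₀ : ∀ x ∈ frontier O, v x = 0) {ε : ℝ} (hε : 0 < ε)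
    (i : Fin d) (hx : x ∉ O) : truncatedGreenFlux O u v ε i =ᶠ[𝓝 x] 0 := by
  have hs := eventually_lt_of_frontier_eq_zero (s := fun y => u y ^ 2 + v y ^ 2) hO
    ((hu.pow 2).add (hv.pow 2)) (fun y hy => by simp [hu₀ y hy, hv₀ y hy]) hx hε
  filter_upwards [hs] with y hy
  by_cases hyO : y ∈ O
  · rw [truncatedGreenFlux, indicator_of_mem hyO, dirichletCutoff,
      smoothStep.eq_zero_of_le_one ((div_lt_one hε).2 (hy hyO)).le, zero_mul, Pi.zero_apply]
  · exact indicator_of_notMem hyO _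

theorem contDiff_truncatedGreenFlux (hO : IsOpen O) (hu : ContDiffOn ℝ 2 u O)
    (hv : ContDiffOn ℝ 2 v O) (hu' : ContinuousOn u (closure O))
    (hv' : ContinuousOn v (closure O)) (hu₀ : ∀ x ∈ frontier O, u x = 0)
    (hv₀ : ∀ x ∈ frontier O, v x = 0) {ε : ℝ} (hε : 0 < ε) (i : Fin d) :
    ContDiff ℝ 1 (truncatedGreenFlux O u v ε i) := by
  refine contDiff_iff_contDiffAt.2 fun x => ?_
  by_cases hx : x ∈ O
  · have hflux := (contDiffOn_dirichletCutoff hu hv ε).mul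
      (contDiffOn_greenFlux hO hu hv (EuclideanSpace.single i 1))
    refine (hflux.contDiffAt (hO.mem_nhds hx)).congr_of_eventuallyEq ?_
    filter_upwards [hO.mem_nhds hx] with y hy using indicator_of_mem hy _
  · exact contDiffAt_const.congr_of_eventuallyEq
      (truncatedGreenFlux_eventuallyEq_zero hO hu' hv' hu₀ hv₀ hε i hx)

theorem hasCompactSupport_truncatedGreenFlux (hK : IsCompact (closure O)) (ε : ℝ) (i : Fin d) :
    HasCompactSupport (truncatedGreenFlux O u v ε i) :=
  hK.of_isClosed_subset isClosed_closure (closure_mono support_indicator_subset)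

theorem divergence_truncatedGreenFlux_of_mem (hO : IsOpen O) (hu : ContDiffOn ℝ 2 u O)
    (hv : ContDiffOn ℝ 2 v O) (ε : ℝ) (hx : x ∈ O) :
    divergence (truncatedGreenFlux O u v ε) x =
      dirichletCutoff u v ε x * (v x * lap u x - u x * lap v x) +
        ∑ i, fderiv ℝ (dirichletCutoff u v ε) x (EuclideanSpace.single i 1) *
          greenFlux u v (EuclideanSpace.single i 1) x := by
  have hloc (i : Fin d) : fderiv ℝ (truncatedGreenFlux O u v ε i) x = fderiv ℝ
      (fun y => dirichletCutoff u v ε y * greenFlux u v (EuclideanSpace.single i 1) y) x := by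
    refine Filter.EventuallyEq.fderiv_eq ?_
    filter_upwards [hO.mem_nhds hx] with y hy using indicator_of_mem hy _
  rw [← divergence_mul_greenFlux hO hu hv (((contDiffOn_dirichletCutoff hu hv ε).contDiffAt
    (hO.mem_nhds hx)).differentiableAt one_ne_zero) hx]
  exact Finset.sum_congr rfl fun i _ => by rw [hloc]

theorem divergence_truncatedGreenFlux_of_notMem (hO : IsOpen O)
    (hu' : ContinuousOn u (closure O)) (hv' : ContinuousOn v (closure O))
    (hu₀ : ∀ x ∈ frontier O, u x = 0) (hv₀ : ∀ x ∈ frontier O, v x = 0) {ε : ℝ} (hε : 0 < ε)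
    (hx : x ∉ O) : divergence (truncatedGreenFlux O u v ε) x = 0 :=
  Finset.sum_eq_zero fun i _ => by
    rw [(truncatedGreenFlux_eventuallyEq_zero hO hu' hv' hu₀ hv₀ hε i hx).fderiv_eq]
    simp

theorem abs_divergence_truncatedGreenFlux_le {K M ε : ℝ} (hK : ∀ t, |t * deriv smoothStep t| ≤ K)
    (hε : 0 < ε) (hO : IsOpen O) (hu : ContDiffOn ℝ 2 u O) (hv : ContDiffOn ℝ 2 v O)
    (huM : ‖fderiv ℝ u x‖ ≤ M) (hvM : ‖fderiv ℝ v x‖ ≤ M) (hx : x ∈ O) :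
    |divergence (truncatedGreenFlux O u v ε) x| ≤
      |v x * lap u x - u x * lap v x| + d * (2 * M ^ 2 * K) := by
  have hdiff {w : EuclideanSpace ℝ (Fin d) → ℝ} (hw : ContDiffOn ℝ 2 w O) :
      DifferentiableAt ℝ w x :=
    (hw.contDiffAt (hO.mem_nhds hx)).differentiableAt (by norm_num)
  have hsingle {f : EuclideanSpace ℝ (Fin d) →L[ℝ] ℝ} (hf : ‖f‖ ≤ M) (i : Fin d) :
      |f (EuclideanSpace.single i 1)| ≤ M := by
    simpa using f.le_of_opNorm_le hf (EuclideanSpace.single i 1)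
  have hχ : |dirichletCutoff u v ε x| ≤ 1 := by
    rw [dirichletCutoff, abs_of_nonneg (smoothStep.nonneg _)]
    exact smoothStep.le_one _
  rw [divergence_truncatedGreenFlux_of_mem hO hu hv ε hx]
  calc _ ≤ |dirichletCutoff u v ε x * (v x * lap u x - u x * lap v x)| +
        ∑ i, |fderiv ℝ (dirichletCutoff u v ε) x (EuclideanSpace.single i 1) *
          greenFlux u v (EuclideanSpace.single i 1) x| :=
        (abs_add_le _ _).trans (add_le_add_right (Finset.abs_sum_le_sum_abs _ _) _)
    _ ≤ |v x * lap u x - u x * lap v x| + ∑ _i : Fin d, 2 * M ^ 2 * K := by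
        refine add_le_add ?_ (Finset.sum_le_sum fun i _ => ?_)
        · rw [abs_mul]; exact mul_le_of_le_one_left (abs_nonneg _) hχ
        · exact abs_fderiv_dirichletCutoff_mul_greenFlux_le hK hε (hdiff hu) (hdiff hv)
            (hsingle huM i) (hsingle hvM i)
    _ = |v x * lap u x - u x * lap v x| + d * (2 * M ^ 2 * K) := by simp

theorem tendsto_divergence_truncatedGreenFlux (hO : IsOpen O) (hu : ContDiffOn ℝ 2 u O)
    (hv : ContDiffOn ℝ 2 v O) (hx : x ∈ O) :
    Tendsto (fun ε => divergence (truncatedGreenFlux O u v ε) x) (𝓝[>] 0)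
      (𝓝 (v x * lap u x - u x * lap v x)) := by
  refine tendsto_const_nhds.congr' ?_
  rcases (add_nonneg (sq_nonneg (u x)) (sq_nonneg (v x))).eq_or_lt with hs | hs
  · have hux : u x = 0 := by nlinarith [sq_nonneg (u x), sq_nonneg (v x)]
    have hvx : v x = 0 := by nlinarith [sq_nonneg (u x), sq_nonneg (v x)]
    filter_upwards with ε
    simp [divergence_truncatedGreenFlux_of_mem hO hu hv ε hx, greenFlux, hux, hvx]
  · filter_upwards [Ioo_mem_nhdsGT (half_pos hs)] with ε ⟨hε, hεs⟩
    have h2 : 2 < (u x ^ 2 + v x ^ 2) / ε := by rw [lt_div_iff₀ hε]; linarith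
    have hdiff {w : EuclideanSpace ℝ (Fin d) → ℝ} (hw : ContDiffOn ℝ 2 w O) :
        DifferentiableAt ℝ w x :=
      (hw.contDiffAt (hO.mem_nhds hx)).differentiableAt (by norm_num)
    simp [divergence_truncatedGreenFlux_of_mem hO hu hv ε hx, dirichletCutoff,
      smoothStep.eq_one_of_two_le h2.le, fderiv_dirichletCutoff_apply (hdiff hu) (hdiff hv),
      smoothStep.deriv_eq_zero (fun h => h2.not_ge h.2)]

theorem setIntegral_mul_lap_sub_mul_lap_eq_zero (hO : IsOpen O) (hOb : IsBounded O)
    (hu : ContDiffOn ℝ 2 u O) (hu' : ContDiffOn ℝ 1 u (closure O))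
    (hv : ContDiffOn ℝ 2 v O) (hv' : ContDiffOn ℝ 1 v (closure O))
    (hu₀ : ∀ x ∈ frontier O, u x = 0) (hv₀ : ∀ x ∈ frontier O, v x = 0)
    (hint : IntegrableOn (fun x => v x * lap u x - u x * lap v x) O) :
    ∫ x in O, (v x * lap u x - u x * lap v x) = 0 := by
  have hK := hOb.isCompact_closure
  obtain ⟨Mu, hMu⟩ := exists_forall_norm_fderiv_le_of_contDiffOn_closure hO hK hu'
  obtain ⟨Mv, hMv⟩ := exists_forall_norm_fderiv_le_of_contDiffOn_closure hO hK hv'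
  obtain ⟨K, hK'⟩ := smoothStep.exists_abs_mul_deriv_le
  have hF (ε : ℝ) (hε : 0 < ε) (i : Fin d) := contDiff_truncatedGreenFlux hO hu hv
    hu'.continuousOn hv'.continuousOn hu₀ hv₀ hε i
  have hlim := tendsto_integral_filter_of_dominated_convergence (μ := volume.restrict O)
    (l := 𝓝[>] 0) (F := fun ε => divergence (truncatedGreenFlux O u v ε))
    (fun x => |v x * lap u x - u x * lap v x| + d * (2 * max Mu Mv ^ 2 * K))
    (eventually_mem_nhdsWithin.mono fun ε hε =>
      (continuous_divergence (hF ε hε)).aestronglyMeasurable)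
    (eventually_mem_nhdsWithin.mono fun ε hε => (ae_restrict_iff' hO.measurableSet).2 <|
      .of_forall fun x hx => abs_divergence_truncatedGreenFlux_le hK' hε hO hu hv
        ((hMu x hx).trans (le_max_left _ _)) ((hMv x hx).trans (le_max_right _ _)) hx)
    (hint.abs.add (integrableOn_const hOb.measure_lt_top.ne))
    ((ae_restrict_iff' hO.measurableSet).2 <|
      .of_forall fun x hx => tendsto_divergence_truncatedGreenFlux hO hu hv hx)
  refine tendsto_nhds_unique hlim (tendsto_const_nhds.congr' ?_)
  filter_upwards [eventually_mem_nhdsWithin] with ε hε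
  rw [setIntegral_eq_integral_of_forall_compl_eq_zero fun x hx =>
      divergence_truncatedGreenFlux_of_notMem hO hu'.continuousOn hv'.continuousOn hu₀ hv₀ hε hx,
    integral_divergence_eq_zero (hF ε hε) fun i => hasCompactSupport_truncatedGreenFlux hK ε i]

end Euclidean

theorem cross_integral_identity_of_positive_solutions_general (d : ℕ)
    (O : Set (EuclideanSpace ℝ (Fin d))) (hO : IsOpen O)
    (hObdd : Bornology.IsBounded O)
    (p : ℝ) (hp : 2 ≤ p) (lam : ℝ)
    (u₁ u₂ : EuclideanSpace ℝ (Fin d) → ℝ)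
    (h₁C2 : ContDiffOn ℝ 2 u₁ O) (h₁C1 : ContDiffOn ℝ 1 u₁ (closure O))
    (h₂C2 : ContDiffOn ℝ 2 u₂ O) (h₂C1 : ContDiffOn ℝ 1 u₂ (closure O))
    (h₁eq : ∀ x ∈ O, lap u₁ x - u₁ x ^ (p - 1) + lam * u₁ x = 0)
    (h₂eq : ∀ x ∈ O, lap u₂ x - u₂ x ^ (p - 1) + lam * u₂ x = 0)
    (h₁bd : ∀ x ∈ frontier O, u₁ x = 0) (h₂bd : ∀ x ∈ frontier O, u₂ x = 0) :
    ∫ x in O, (u₁ x ^ (p - 1) * u₂ x - u₂ x ^ (p - 1) * u₁ x) = 0 := by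
  have hlap : EqOn (fun x => u₁ x ^ (p - 1) * u₂ x - u₂ x ^ (p - 1) * u₁ x)
      (fun x => u₂ x * lap u₁ x - u₁ x * lap u₂ x) O := fun x hx => by
    linear_combination (-u₂ x) * h₁eq x hx + u₁ x * h₂eq x hx
  have hcont : ContinuousOn (fun x => u₁ x ^ (p - 1) * u₂ x - u₂ x ^ (p - 1) * u₁ x)
      (closure O) := by
    have hp₁ : 0 ≤ p - 1 := by linarith
    exact ((h₁C1.continuousOn.rpow_const fun _ _ => .inr hp₁).mul h₂C1.continuousOn).sub
      ((h₂C1.continuousOn.rpow_const fun _ _ => .inr hp₁).mul h₁C1.continuousOn)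
  rw [setIntegral_congr_fun hO.measurableSet hlap]
  refine setIntegral_mul_lap_sub_mul_lap_eq_zero hO hObdd h₁C2 h₁C1 h₂C2 h₂C1 h₁bd h₂bd ?_
  exact ((hcont.integrableOn_compact hObdd.isCompact_closure).mono_set subset_closure).congr_fun
    hlap hO.measurableSet

/-- Let `O ⊆ ℝ^d` be a bounded open set with `C²` boundary, `p ≥ 2` and
`λ > 0`. If `u₁, u₂` are `C²` on `O` and `C¹` on `closure O`, and each satisfies
`Δu − u^{p−1} + λu = 0` and `u > 0` in `O`, and `u = 0` on `∂O`, then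
`∫_O (u₁^{p−1} u₂ − u₂^{p−1} u₁) dx = 0`. -/
theorem cross_integral_identity_of_positive_solutions (d : ℕ)
    (O : Set (EuclideanSpace ℝ (Fin d))) (hO : IsOpen O)
    (hObdd : Bornology.IsBounded O) (hOC2 : IsC2Boundary O)
    (p : ℝ) (hp : 2 ≤ p) (lam : ℝ) (hlam : 0 < lam)
    (u₁ u₂ : EuclideanSpace ℝ (Fin d) → ℝ)
    (h₁C2 : ContDiffOn ℝ 2 u₁ O) (h₁C1 : ContDiffOn ℝ 1 u₁ (closure O))
    (h₂C2 : ContDiffOn ℝ 2 u₂ O) (h₂C1 : ContDiffOn ℝ 1 u₂ (closure O))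
    (h₁eq : ∀ x ∈ O, lap u₁ x - u₁ x ^ (p - 1) + lam * u₁ x = 0)
    (h₂eq : ∀ x ∈ O, lap u₂ x - u₂ x ^ (p - 1) + lam * u₂ x = 0)
    (h₁pos : ∀ x ∈ O, 0 < u₁ x) (h₂pos : ∀ x ∈ O, 0 < u₂ x)
    (h₁bd : ∀ x ∈ frontier O, u₁ x = 0) (h₂bd : ∀ x ∈ frontier O, u₂ x = 0) :
    ∫ x in O, (u₁ x ^ (p - 1) * u₂ x - u₂ x ^ (p - 1) * u₁ x) = 0 :=
  cross_integral_identity_of_positive_solutions_general d O hO hObdd p hp lam u₁ u₂ h₁C2 h₁C1 h₂C2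
    h₂C1 h₁eq h₂eq h₁bd h₂bd
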